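/- Let {|φ_x^a⟩} be n mutually unbiased bases of ℂ^d and ρ a density matrix. Then (1/n) ∑_{x=0}^{n−1} max_a ⟨φ_x^a| ρ |φ_x^a⟩ ≤ (1/d)(1 + (d−1)/√n). -/

import Mathlib

open Matrix Finset Filter
open scoped ComplexOrder

noncomputable def expec {d : ℕ} (ρ : Matrix (Fin d) (Fin d) ℂ) (v : Fin d → ℂ) : ℝ :=
  Complex.re (dotProduct (star v) (ρ.mulVec v))

def IsDensity {d : ℕ} (ρ : Matrix (Fin d) (Fin d) ℂ) : Prop :=
  ρ.PosSemidef ∧ ρ.trace = 1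

def IsMUBFamily {d n : ℕ} (φ : Fin n → Fin d → Fin d → ℂ) : Prop :=
  (∀ x a b, dotProduct (star (φ x a)) (φ x b) = if a = b then 1 else 0) ∧
  (∀ x y a b, x ≠ y → ‖dotProduct (star (φ x a)) (φ y b)‖ = 1 / Real.sqrt d)

noncomputable def outer {d : ℕ} (v : Fin d → ℂ) : Matrix (Fin d) (Fin d) ℂ :=
  vecMulVec v (star v)

noncomputable def gibbs {d : ℕ} (β : ℝ) (H : Matrix (Fin d) (Fin d) ℂ) : Matrix (Fin d) (Fin d) ℂ :=
  (NormedSpace.exp ((-β : ℂ) • H)).trace⁻¹ • NormedSpace.exp ((-β : ℂ) • H)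

/-!
Fix in each basis an outcome attaining the maximum and let `P x` be its rank-one projector. In the
real Hilbert–Schmidt inner product `⟪A, B⟫ = Re tr (B Aᴴ)`, subtracting `1/d` (a trace-one
matrix) from `ρ` and from each `P x` centres them: `⟪ρ - 1/d, ∑ x, (P x - 1/d)⟫ = ∑ x, ⟪ρ, P x⟫ - n/d`,
`‖ρ - 1/d‖² = tr ρ² - 1/d ≤ 1 - 1/d`, and mutual unbiasedness (`⟪P x, P y⟫ = 1/d` for `x ≠ y`) makes
the `P x - 1/d` pairwise orthogonal of squared norm `1 - 1/d`. Cauchy–Schwarz then gives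
`∑ x, ⟪ρ, P x⟫ ≤ n/d + √n (1 - 1/d)`.
-/

open scoped RealInnerProductSpace

theorem Matrix.PosSemidef.re_trace_mul_self_le {𝕜 m : Type*} [RCLike 𝕜] [Fintype m]
    [DecidableEq m] {A : Matrix m m 𝕜} (hA : A.PosSemidef) :
    RCLike.re (A * A).trace ≤ RCLike.re A.trace ^ 2 := by
  have trace_conj (X : Matrix m m 𝕜) :
      (Unitary.conjStarAlgAut 𝕜 _ hA.1.eigenvectorUnitary X).trace = X.trace := by
    rw [Unitary.conjStarAlgAut_apply, trace_mul_cycle, Unitary.coe_star_mul_self, one_mul]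
  rw [hA.1.spectral_theorem, ← map_mul, trace_conj, trace_conj, diagonal_mul_diagonal,
    trace_diagonal, trace_diagonal]
  simpa [← RCLike.ofReal_pow, sq] using
    sum_sq_le_sq_sum_of_nonneg (s := univ) fun i _ => hA.eigenvalues_nonneg i

section Equiangular

variable {E : Type*} [SeminormedAddCommGroup E] [InnerProductSpace ℝ E]

theorem inner_sub_sub_of_inner_eq {x y e : E} {c : ℝ} (hx : ⟪x, e⟫ = c) (hy : ⟪y, e⟫ = c)
    (he : ⟪e, e⟫ = c) : ⟪x - e, y - e⟫ = ⟪x, y⟫ - c := by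
  rw [inner_sub_left, inner_sub_right, inner_sub_right, real_inner_comm y e, hx, hy, he]
  ring

theorem sum_inner_le_of_pairwise_inner_eq {ι : Type*} [Fintype ι] {r e : E} {p : ι → E} {c : ℝ}
    (hr : ⟪r, e⟫ = c) (he : ⟪e, e⟫ = c) (hp : ∀ i, ⟪p i, e⟫ = c) (hrr : ⟪r, r⟫ ≤ 1)
    (hpp : ∀ i, ⟪p i, p i⟫ = 1) (hpq : Pairwise fun i j => ⟪p i, p j⟫ = c) :
    ∑ i, ⟪r, p i⟫ ≤ Fintype.card ι * c + √(Fintype.card ι) * (1 - c) := by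
  set a := r - e
  set b := ∑ i, (p i - e)
  have hab : ⟪a, b⟫ = ∑ i, ⟪r, p i⟫ - Fintype.card ι * c := by
    rw [inner_sum]
    simp only [a, inner_sub_sub_of_inner_eq hr (hp _) he]
    rw [sum_sub_distrib, sum_const, card_univ, nsmul_eq_mul]
  have haa : ‖a‖ ^ 2 ≤ 1 - c := by
    rw [← real_inner_self_eq_norm_sq, inner_sub_sub_of_inner_eq hr hr he]
    linarith
  have hbb : ‖b‖ ^ 2 = Fintype.card ι * (1 - c) := by
    have hrow (i : ι) : ∑ j, ⟪p i - e, p j - e⟫ = 1 - c := by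
      rw [sum_eq_single i (fun j _ hji => by
        rw [inner_sub_sub_of_inner_eq (hp i) (hp j) he, hpq hji.symm, sub_self]) (by simp),
        inner_sub_sub_of_inner_eq (hp i) (hp i) he, hpp]
    rw [← real_inner_self_eq_norm_sq, sum_inner]
    simp only [b, inner_sum, hrow, sum_const, card_univ, nsmul_eq_mul]
  have hc : 0 ≤ 1 - c := (sq_nonneg _).trans haa
  calc ∑ i, ⟪r, p i⟫ = Fintype.card ι * c + ⟪a, b⟫ := by rw [hab]; ring
    _ ≤ Fintype.card ι * c + ‖a‖ * ‖b‖ := by gcongr; exact real_inner_le_norm a b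
    _ ≤ Fintype.card ι * c + √(1 - c) * √(Fintype.card ι * (1 - c)) := by
        rw [← hbb, Real.sqrt_sq (norm_nonneg b)]
        gcongr
        exact Real.le_sqrt_of_sq_le haa
    _ = Fintype.card ι * c + √(Fintype.card ι) * (1 - c) := by
        rw [Real.sqrt_mul' _ hc, mul_left_comm, Real.mul_self_sqrt hc]

end Equiangular

section HilbertSchmidt

variable {m : Type*} [Fintype m] [DecidableEq m]

noncomputable abbrev Matrix.hilbertSchmidtSeminormedAddCommGroup :
    SeminormedAddCommGroup (Matrix m m ℂ) :=
  toMatrixSeminormedAddCommGroup 1 PosSemidef.one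

attribute [local instance] Matrix.hilbertSchmidtSeminormedAddCommGroup

noncomputable abbrev Matrix.hilbertSchmidtInnerProductSpace : InnerProductSpace ℝ (Matrix m m ℂ) :=
  letI := toMatrixInnerProductSpace (1 : Matrix m m ℂ) PosSemidef.one
  InnerProductSpace.rclikeToReal ℂ _

attribute [local instance] Matrix.hilbertSchmidtInnerProductSpace

theorem Matrix.hilbertSchmidt_inner_def (A B : Matrix m m ℂ) : ⟪A, B⟫ = (B * Aᴴ).trace.re := by
  change (B * 1 * Aᴴ).trace.re = _
  rw [mul_one]

theorem Matrix.hilbertSchmidt_inner_smul_one {A : Matrix m m ℂ} (hA : A.trace = 1) (c : ℂ) :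
    ⟪A, c • 1⟫ = c.re := by
  simp [hilbertSchmidt_inner_def, trace_conjTranspose, hA]

theorem Matrix.PosSemidef.hilbertSchmidt_inner_self_le {A : Matrix m m ℂ} (hA : A.PosSemidef) :
    ⟪A, A⟫ ≤ A.trace.re ^ 2 := by
  rw [hilbertSchmidt_inner_def, hA.1.eq]
  exact hA.re_trace_mul_self_le

variable {d : ℕ}

theorem trace_outer (v : Fin d → ℂ) : (outer v).trace = star v ⬝ᵥ v := by
  rw [outer, trace_vecMulVec, dotProduct_comm]

theorem hilbertSchmidt_inner_outer_outer (u v : Fin d → ℂ) :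
    ⟪outer u, outer v⟫ = ‖star u ⬝ᵥ v‖ ^ 2 := by
  rw [Matrix.hilbertSchmidt_inner_def, outer, outer, conjTranspose_vecMulVec, star_star,
    vecMulVec_mul_vecMulVec, trace_vecMulVec, dotProduct_smul, smul_eq_mul, dotProduct_comm v,
    star_dotProduct v u, Complex.star_def, Complex.conj_mul']
  norm_cast

theorem Matrix.IsHermitian.hilbertSchmidt_inner_outer {ρ : Matrix (Fin d) (Fin d) ℂ}
    (hρ : ρ.IsHermitian) (v : Fin d → ℂ) : ⟪ρ, outer v⟫ = expec ρ v := by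
  rw [hilbertSchmidt_inner_def, hρ.eq, outer, trace_mul_comm, mul_vecMulVec, trace_vecMulVec,
    dotProduct_comm, expec]

theorem sum_expec_le_of_pairwise_norm_dotProduct_eq (hd : d ≠ 0) {ι : Type*} [Fintype ι]
    {ρ : Matrix (Fin d) (Fin d) ℂ} (hρ : IsDensity ρ) {v : ι → Fin d → ℂ}
    (hv : ∀ i, star (v i) ⬝ᵥ v i = 1)
    (hvw : Pairwise fun i j => ‖star (v i) ⬝ᵥ v j‖ = 1 / √d) :
    ∑ i, expec ρ (v i) ≤
      Fintype.card ι * (d : ℝ)⁻¹ + √(Fintype.card ι) * (1 - (d : ℝ)⁻¹) := by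
  have htr : ((d : ℂ)⁻¹ • (1 : Matrix (Fin d) (Fin d) ℂ)).trace = 1 := by
    rw [trace_smul, trace_one, Fintype.card_fin, smul_eq_mul,
      inv_mul_cancel₀ (Nat.cast_ne_zero.mpr hd)]
  have hre : ((d : ℂ)⁻¹).re = (d : ℝ)⁻¹ := by
    rw [← Complex.ofReal_natCast, ← Complex.ofReal_inv, Complex.ofReal_re]
  have key := sum_inner_le_of_pairwise_inner_eq (r := ρ) (e := (d : ℂ)⁻¹ • 1)
    (p := fun i => outer (v i)) (c := (d : ℝ)⁻¹)
    (by rw [Matrix.hilbertSchmidt_inner_smul_one hρ.2, hre])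
    (by rw [Matrix.hilbertSchmidt_inner_smul_one htr, hre])
    (fun i => by rw [Matrix.hilbertSchmidt_inner_smul_one (by rw [trace_outer, hv]), hre])
    (by simpa [hρ.2] using hρ.1.hilbertSchmidt_inner_self_le)
    (fun i => by rw [hilbertSchmidt_inner_outer_outer, hv, norm_one, one_pow])
    (fun i j hij => by
      dsimp only
      rw [hilbertSchmidt_inner_outer_outer, hvw hij, div_pow, one_pow, Real.sq_sqrt d.cast_nonneg,
        one_div])
  simpa only [hρ.1.1.hilbertSchmidt_inner_outer] using key

end HilbertSchmidt

/-- Per-basis-maximum MUB overlap bound. -/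
theorem mub_max_overlap_bound {d n : ℕ} (hd : 1 ≤ d) (hn : 1 ≤ n)
    (φ : Fin n → Fin d → Fin d → ℂ) (hφ : IsMUBFamily φ)
    (ρ : Matrix (Fin d) (Fin d) ℂ) (hρ : IsDensity ρ) :
    (1 / (n : ℝ)) * ∑ x, Finset.univ.sup' ⟨⟨0, hd⟩, Finset.mem_univ _⟩
        (fun a => expec ρ (φ x a)) ≤
      (1 / (d : ℝ)) * (1 + ((d : ℝ) - 1) / Real.sqrt n) := by
  obtain ⟨horth, hcross⟩ := hφ
  choose a _ ha using fun x => exists_mem_eq_sup' ⟨⟨0, hd⟩, mem_univ _⟩ fun a => expec ρ (φ x a)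
  have hsum := sum_expec_le_of_pairwise_norm_dotProduct_eq (by omega) hρ (v := fun x => φ x (a x))
    (fun x => by simpa using horth x (a x) (a x)) (fun x y hxy => hcross x y _ _ hxy)
  rw [Fintype.card_fin] at hsum
  have hn' : (0 : ℝ) < n := by exact_mod_cast hn
  calc (1 / (n : ℝ)) * ∑ x, univ.sup' _ (fun a => expec ρ (φ x a))
      = (1 / (n : ℝ)) * ∑ x, expec ρ (φ x (a x)) := by simp only [ha]
    _ ≤ (1 / (n : ℝ)) * (n * (d : ℝ)⁻¹ + √n * (1 - (d : ℝ)⁻¹)) := by gcongr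
    _ = (1 / (d : ℝ)) * (1 + ((d : ℝ) - 1) / √n) := by
      have hsqrt : √(n : ℝ) ^ 2 = n := Real.sq_sqrt hn'.le
      field_simp
      linear_combination (d - 1 : ℝ) * hsqrt
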